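/- arXiv:math/0607656 — 7 statements merged into one kernel-verified Lean document; each statement's English description precedes it below -/
import Mathlib

section
/- Let K be a field and f(X,Y) = a_0(X) + a_1(X)Y + ... + a_m(X)Y^m with a_0, ..., a_m ∈ K[X] and a_0·a_m ≠ 0. If d is a divisor of a_m in K[X] such that deg a_m > m·deg d + H_1(f), then f(X,Y), viewed as a polynomial in Y over K(X), has at most Ω(a_m/d) irreducible factors over K(X), counted with multiplicity. -/
/-!
Give `X` the weight `1` and `Y` the weight `-s`, where `s = deg d`. The hypothesis on
`deg aₘ` says that the leading term `aₘ Yᵐ` of `f` has strictly larger weighted degree than every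
other term. Weighted leading forms multiply, so this dominance passes to every factor of `f` in
`K[X][Y]`; since `a₀ ≠ 0`, an irreducible factor `g` of positive `Y`-degree then has
`deg lc(g) > s`. Splitting `d` along `aₘ = ∏ lc(g)` as `d = ∏ d_g` with `d_g ∣ lc(g)`, each such
`g` contributes at least `Ω(d_g) + 1` to `Ω(aₘ)` (because `deg d_g ≤ s < deg lc(g)`), and each
constant factor at least `Ω(d_g)`. By Gauss's lemma the factors of positive `Y`-degree are the
irreducible factors of `f` over `K(X)`.
-/

open Polynomial

/-- Ω(p): number of irreducible factors of `p`, counted with multiplicity. -/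
noncomputable def Omega {R : Type*} [CommMonoidWithZero R] [IsCancelMulZero R]
    [UniqueFactorizationMonoid R] (p : R) : ℕ :=
  Multiset.card (UniqueFactorizationMonoid.factors p)

/-- H₁(f) for f = a₀ + a₁Y + ⋯ + aₘYᵐ : the max of the degrees of a₀,…,a_{m-1}. -/
noncomputable def H1 {K : Type*} [Field K] (a : ℕ → Polynomial K) (m : ℕ) : ℕ :=
  (Finset.range m).sup fun i => (a i).natDegree

section Omega

variable {R : Type*} [CommMonoidWithZero R] [UniqueFactorizationMonoid R]

lemma Omega_mul {x y : R} (hx : x ≠ 0) (hy : y ≠ 0) : Omega (x * y) = Omega x + Omega y := by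
  rw [Omega, Omega, Omega, ← Multiset.card_add]
  exact Multiset.card_eq_card_of_rel (UniqueFactorizationMonoid.factors_mul hx hy)

lemma Omega_of_isUnit {u : R} (hu : IsUnit u) : Omega u = 0 := by
  rw [Omega, UniqueFactorizationMonoid.factors_of_isUnit hu, Multiset.card_zero]

lemma Omega_of_irreducible {p : R} (hp : Irreducible p) : Omega p = 1 :=
  UniqueFactorizationMonoid.card_factors_of_irreducible hp

lemma Omega_pos {x : R} (hx : x ≠ 0) (hu : ¬IsUnit x) : 0 < Omega x :=
  Multiset.card_pos.mpr (UniqueFactorizationMonoid.factors_pos hx |>.mpr hu).ne'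

lemma Omega_le_of_dvd {x y : R} (h : x ∣ y) (hy : y ≠ 0) : Omega x ≤ Omega y := by
  obtain ⟨c, rfl⟩ := h
  rw [Omega_mul (left_ne_zero_of_mul hy) (right_ne_zero_of_mul hy)]
  exact Nat.le_add_right _ _

end Omega

open Polynomial.Bivariate

section WeightedDegree

open Finset.HasAntidiagonal

variable {K : Type*} [Field K] (s : ℕ)

/-- The weighted degree of the term `P.coeff i * Y ^ i` for the weights `deg X = 1`,
`deg Y = -s`. -/
noncomputable def weightedDeg (P : K[X][Y]) (i : ℕ) : ℤ :=
  (P.coeff i).natDegree - i * s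

def LeadingTermDominates (P : K[X][Y]) : Prop :=
  ∀ i ∈ P.support, i < P.natDegree → weightedDeg s P i < weightedDeg s P P.natDegree

def IsFirstMaxWeight (P : K[X][Y]) (i₀ : ℕ) : Prop :=
  i₀ ∈ P.support ∧ ∀ i ∈ P.support, weightedDeg s P i ≤ weightedDeg s P i₀ ∧
    (i < i₀ → weightedDeg s P i < weightedDeg s P i₀)

variable {s}

lemma exists_isFirstMaxWeight {P : K[X][Y]} (hP : P ≠ 0) : ∃ i₀, IsFirstMaxWeight s P i₀ := by
  obtain ⟨i₀, hi₀, hmax⟩ := P.support.exists_max_image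
    (fun i => toLex (weightedDeg s P i, -(i : ℤ))) (support_nonempty.mpr hP)
  refine ⟨i₀, hi₀, fun i hi => ?_⟩
  have h := hmax i hi
  rw [Prod.Lex.toLex_le_toLex] at h
  omega

lemma weightedDeg_mul_natDegree {P Q : K[X][Y]} (hP : P ≠ 0) (hQ : Q ≠ 0) :
    weightedDeg s (P * Q) (P * Q).natDegree
      = weightedDeg s P P.natDegree + weightedDeg s Q Q.natDegree := by
  simp only [weightedDeg, coeff_natDegree]
  rw [leadingCoeff_mul, natDegree_mul hP hQ,
    natDegree_mul (leadingCoeff_ne_zero.mpr hP) (leadingCoeff_ne_zero.mpr hQ)]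
  push_cast
  ring

/-- Every other product `P.coeff i * Q.coeff j` with `i + j = i₀ + j₀` has `i < i₀` or `j < j₀`,
hence strictly smaller weighted degree, so it cannot cancel `P.coeff i₀ * Q.coeff j₀`. -/
lemma IsFirstMaxWeight.degree_coeff_mul {P Q : K[X][Y]} {i₀ j₀ : ℕ}
    (hP : IsFirstMaxWeight s P i₀) (hQ : IsFirstMaxWeight s Q j₀) :
    ((P * Q).coeff (i₀ + j₀)).degree = (P.coeff i₀ * Q.coeff j₀).degree := by
  obtain ⟨hi₀, hPmax⟩ := hP
  obtain ⟨hj₀, hQmax⟩ := hQ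
  rw [mem_support_iff] at hi₀ hj₀
  have hlead : (P.coeff i₀ * Q.coeff j₀).degree ≠ ⊥ :=
    degree_eq_bot.not.mpr (mul_ne_zero hi₀ hj₀)
  have hsmaller : ∀ x ∈ (antidiagonal (i₀ + j₀)).erase (i₀, j₀),
      (P.coeff x.1 * Q.coeff x.2).degree < (P.coeff i₀ * Q.coeff j₀).degree := by
    rintro ⟨i, j⟩ hx
    obtain ⟨hne, hij⟩ := Finset.mem_erase.mp hx
    rw [mem_antidiagonal] at hij
    by_cases hij0 : P.coeff i * Q.coeff j = 0
    · rw [hij0, degree_zero]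
      exact bot_lt_iff_ne_bot.mpr hlead
    have hi : i ∈ P.support := mem_support_iff.mpr (left_ne_zero_of_mul hij0)
    have hj : j ∈ Q.support := mem_support_iff.mpr (right_ne_zero_of_mul hij0)
    have hsplit : i < i₀ ∨ j < j₀ := by
      by_contra! h
      exact hne (Prod.ext (by omega) (by omega))
    have key :
        weightedDeg s P i + weightedDeg s Q j < weightedDeg s P i₀ + weightedDeg s Q j₀ := by
      rcases hsplit with h | h
      · exact add_lt_add_of_lt_of_le ((hPmax i hi).2 h) (hQmax j hj).1
      · exact add_lt_add_of_le_of_lt (hPmax i hi).1 ((hQmax j hj).2 h)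
    have hs : (i : ℤ) * s + j * s = i₀ * s + j₀ * s := by
      rw [← add_mul, ← add_mul]
      exact_mod_cast congrArg (· * s) hij
    apply degree_lt_degree
    rw [natDegree_mul (left_ne_zero_of_mul hij0) (right_ne_zero_of_mul hij0),
      natDegree_mul hi₀ hj₀]
    simp only [weightedDeg] at key
    omega
  have hmem : (i₀, j₀) ∈ antidiagonal (i₀ + j₀) := mem_antidiagonal.mpr rfl
  rw [coeff_mul, ← Finset.add_sum_erase _ _ hmem]
  exact degree_add_eq_left_of_degree_lt <| (degree_sum_le _ _).trans_lt <|
    (Finset.sup_lt_iff (bot_lt_iff_ne_bot.mpr hlead)).mpr hsmaller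

lemma IsFirstMaxWeight.mul {P Q : K[X][Y]} {i₀ j₀ : ℕ} (hP : IsFirstMaxWeight s P i₀)
    (hQ : IsFirstMaxWeight s Q j₀) :
    i₀ + j₀ ∈ (P * Q).support ∧
      weightedDeg s (P * Q) (i₀ + j₀) = weightedDeg s P i₀ + weightedDeg s Q j₀ := by
  have hcoeff := hP.degree_coeff_mul hQ
  have hi₀ := mem_support_iff.mp hP.1
  have hj₀ := mem_support_iff.mp hQ.1
  refine ⟨mem_support_iff.mpr ?_, ?_⟩
  · rw [Ne, ← degree_eq_bot, hcoeff, degree_eq_bot]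
    exact mul_ne_zero hi₀ hj₀
  · simp only [weightedDeg, natDegree_eq_natDegree hcoeff, natDegree_mul hi₀ hj₀]
    push_cast
    ring

end WeightedDegree

section LeadingTermDominates

variable {K : Type*} [Field K] {s : ℕ}

/-- Otherwise the first maximal-weight indices `i₀ < P.natDegree` of `P` and `j₀` of `Q` give a
term of `P * Q` below its leading term whose weight is at least that of the leading term. -/
lemma LeadingTermDominates.of_mul_left {P Q : K[X][Y]} (hP : P ≠ 0) (hQ : Q ≠ 0)
    (h : LeadingTermDominates s (P * Q)) : LeadingTermDominates s P := by
  intro i hi hin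
  by_contra! hwi
  obtain ⟨i₀, hPmax⟩ := exists_isFirstMaxWeight (s := s) hP
  obtain ⟨j₀, hQmax⟩ := exists_isFirstMaxWeight (s := s) hQ
  have hi₀ : i₀ < P.natDegree := by
    refine (le_natDegree_of_mem_supp _ hPmax.1).lt_of_ne fun h₀ => ?_
    have := (hPmax.2 i hi).2 (h₀ ▸ hin)
    rw [h₀] at this
    omega
  have hj₀ : j₀ ≤ Q.natDegree := le_natDegree_of_mem_supp _ hQmax.1
  obtain ⟨hmem, hweight⟩ := hPmax.mul hQmax
  have := h (i₀ + j₀) hmem (by rw [natDegree_mul hP hQ]; omega)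
  rw [hweight, weightedDeg_mul_natDegree hP hQ] at this
  have := (hPmax.2 i hi).1
  have := (hQmax.2 _ (natDegree_mem_support_of_nonzero hQ)).1
  omega

lemma LeadingTermDominates.of_mul_right {P Q : K[X][Y]} (hP : P ≠ 0) (hQ : Q ≠ 0)
    (h : LeadingTermDominates s (P * Q)) : LeadingTermDominates s Q :=
  (mul_comm P Q ▸ h).of_mul_left hQ hP

lemma LeadingTermDominates.natDegree_mul_lt {P : K[X][Y]} (h : LeadingTermDominates s P)
    (hP0 : P.coeff 0 ≠ 0) (hdeg : 0 < P.natDegree) :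
    P.natDegree * s < P.leadingCoeff.natDegree := by
  have := h 0 (mem_support_iff.mpr hP0) hdeg
  simp only [weightedDeg, coeff_natDegree] at this
  omega

end LeadingTermDominates

section FactorCount

variable {K : Type*} [Field K] {s : ℕ}

lemma Omega_map_add_Omega_le_of_irreducible {p : K[X][Y]} (hp : Irreducible p)
    (hlc : p.natDegree ≠ 0 → s < p.leadingCoeff.natDegree) {e : K[X]} (he : e ∣ p.leadingCoeff)
    (hes : e.natDegree ≤ s) :
    Omega (p.map (algebraMap K[X] (RatFunc K))) + Omega e ≤ Omega p.leadingCoeff := by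
  have hlc0 : p.leadingCoeff ≠ 0 := leadingCoeff_ne_zero.mpr hp.ne_zero
  rcases eq_or_ne p.natDegree 0 with hdeg | hdeg
  · have hunit : IsUnit (p.map (algebraMap K[X] (RatFunc K))) := by
      rw [isUnit_iff_degree_eq_zero, degree_map_eq_of_injective (IsFractionRing.injective _ _),
        degree_eq_natDegree hp.ne_zero, hdeg, Nat.cast_zero]
    rw [Omega_of_isUnit hunit, zero_add]
    exact Omega_le_of_dvd he hlc0
  obtain ⟨c, hc⟩ := he
  have he0 : e ≠ 0 := left_ne_zero_of_mul (hc ▸ hlc0)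
  have hc0 : c ≠ 0 := right_ne_zero_of_mul (hc ▸ hlc0)
  have hcu : ¬IsUnit c := by
    intro hu
    have hdc := congrArg natDegree hc
    rw [natDegree_mul he0 hc0, natDegree_eq_zero_of_isUnit hu] at hdc
    have := hlc hdeg
    omega
  have hirr :=
    ((hp.isPrimitive hdeg).irreducible_iff_irreducible_map_fraction_map (K := RatFunc K)).mp hp
  rw [Omega_of_irreducible hirr, hc, Omega_mul he0 hc0]
  have := Omega_pos hc0 hcu
  omega

theorem Omega_map_add_Omega_le {g : K[X][Y]} (hg : LeadingTermDominates s g)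
    (hg0 : g.coeff 0 ≠ 0) {e : K[X]} (he : e ∣ g.leadingCoeff) (hes : e.natDegree ≤ s) :
    Omega (g.map (algebraMap K[X] (RatFunc K))) + Omega e ≤ Omega g.leadingCoeff := by
  induction g using WfDvdMonoid.induction_on_irreducible generalizing e with
  | zero => exact absurd (coeff_zero 0) hg0
  | unit u hu =>
    rw [Omega_of_isUnit (hu.map (mapRingHom _)), zero_add]
    exact Omega_le_of_dvd he (leadingCoeff_ne_zero.mpr hu.ne_zero)
  | mul a p ha hp ih =>
    have hpa := mul_ne_zero hp.ne_zero ha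
    rw [mul_coeff_zero] at hg0
    obtain ⟨e₁, e₂, he₁, he₂, rfl⟩ := exists_dvd_and_dvd_of_dvd_mul (leadingCoeff_mul p a ▸ he)
    have he₁₂ : e₁ * e₂ ≠ 0 := ne_zero_of_dvd_ne_zero (leadingCoeff_ne_zero.mpr hpa) he
    have hs₁ := (natDegree_le_of_dvd (dvd_mul_right e₁ e₂) he₁₂).trans hes
    have hs₂ := (natDegree_le_of_dvd (dvd_mul_left e₂ e₁) he₁₂).trans hes
    have hp' := hg.of_mul_left hp.ne_zero ha
    have hpe₁ := Omega_map_add_Omega_le_of_irreducible hp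
      (fun h => lt_of_le_of_lt (Nat.le_mul_of_pos_left s (Nat.pos_of_ne_zero h))
        (hp'.natDegree_mul_lt (left_ne_zero_of_mul hg0) (Nat.pos_of_ne_zero h))) he₁ hs₁
    have hae₂ := ih (hg.of_mul_right hp.ne_zero ha) (right_ne_zero_of_mul hg0) he₂ hs₂
    have hmap0 : ∀ q : K[X][Y], q ≠ 0 → q.map (algebraMap K[X] (RatFunc K)) ≠ 0 :=
      fun _ hq => (Polynomial.map_ne_zero_iff (IsFractionRing.injective _ _)).mpr hq
    rw [Polynomial.map_mul, Omega_mul (hmap0 p hp.ne_zero) (hmap0 a ha), leadingCoeff_mul,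
      Omega_mul (leadingCoeff_ne_zero.mpr hp.ne_zero) (leadingCoeff_ne_zero.mpr ha),
      Omega_mul (left_ne_zero_of_mul he₁₂) (right_ne_zero_of_mul he₁₂)]
    omega

end FactorCount

section Expansion

variable {R : Type*} [Semiring R] {a : ℕ → R} {m : ℕ}

lemma coeff_sum_range_C_mul_X_pow (k : ℕ) :
    (∑ i ∈ Finset.range (m + 1), C (a i) * X ^ i).coeff k = if k ≤ m then a k else 0 := by
  simp

lemma natDegree_sum_range_C_mul_X_pow (ham : a m ≠ 0) :
    (∑ i ∈ Finset.range (m + 1), C (a i) * X ^ i).natDegree = m := by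
  refine natDegree_eq_of_le_of_coeff_ne_zero
    (natDegree_le_iff_coeff_eq_zero.mpr fun k hk => ?_) ?_
  · rw [coeff_sum_range_C_mul_X_pow, if_neg (not_le.mpr hk)]
  · rwa [coeff_sum_range_C_mul_X_pow, if_pos le_rfl]

lemma leadingCoeff_sum_range_C_mul_X_pow (ham : a m ≠ 0) :
    (∑ i ∈ Finset.range (m + 1), C (a i) * X ^ i).leadingCoeff = a m := by
  rw [leadingCoeff, natDegree_sum_range_C_mul_X_pow ham, coeff_sum_range_C_mul_X_pow,
    if_pos le_rfl]

end Expansion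

lemma leadingTermDominates_of_H1_lt {K : Type*} [Field K] {a : ℕ → K[X]} {m s : ℕ}
    (ham : a m ≠ 0) (hdeg : m * s + H1 a m < (a m).natDegree) :
    LeadingTermDominates s (∑ i ∈ Finset.range (m + 1), C (a i) * X ^ i) := by
  intro i _ hi
  rw [natDegree_sum_range_C_mul_X_pow ham] at hi ⊢
  have hH1 : (a i).natDegree ≤ H1 a m :=
    Finset.le_sup (f := fun i => (a i).natDegree) (Finset.mem_range.mpr hi)
  simp only [weightedDeg, coeff_sum_range_C_mul_X_pow, if_pos hi.le, if_pos le_rfl]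
  have : 0 ≤ (i : ℤ) * s := by positivity
  omega

theorem stmt2_general {K : Type*} [Field K] (m : ℕ)
    (a : ℕ → Polynomial K) (d : Polynomial K)
    (ha0 : a 0 ≠ 0) (ham : a m ≠ 0) (hd : d ∣ a m)
    (f : Polynomial (Polynomial K))
    (hf : f = ∑ i ∈ Finset.range (m + 1), Polynomial.C (a i) * Polynomial.X ^ i)
    (hdeg : (a m).natDegree > m * d.natDegree + H1 a m) :
    Omega (f.map (algebraMap (Polynomial K) (RatFunc K))) ≤ Omega (a m / d) := by
  have hlc : f.leadingCoeff = a m := hf ▸ leadingCoeff_sum_range_C_mul_X_pow ham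
  have hf0 : f.coeff 0 ≠ 0 := by
    rwa [hf, coeff_sum_range_C_mul_X_pow, if_pos (Nat.zero_le m)]
  have hcount := Omega_map_add_Omega_le (hf ▸ leadingTermDominates_of_H1_lt ham hdeg) hf0
    (hlc ▸ hd) le_rfl
  have hd0 : d ≠ 0 := ne_zero_of_dvd_ne_zero ham hd
  have hsplit : Omega (a m) = Omega d + Omega (a m / d) := by
    conv_lhs => rw [← EuclideanDomain.mul_div_cancel' hd0 hd]
    exact Omega_mul hd0 (right_ne_zero_of_mul (EuclideanDomain.mul_div_cancel' hd0 hd ▸ ham))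
  rw [hlc] at hcount
  omega

theorem stmt2 {K : Type*} [Field K] (m : ℕ) (hm : 0 < m)
    (a : ℕ → Polynomial K) (d : Polynomial K)
    (ha0 : a 0 ≠ 0) (ham : a m ≠ 0) (hd : d ∣ a m)
    (f : Polynomial (Polynomial K))
    (hf : f = ∑ i ∈ Finset.range (m + 1), Polynomial.C (a i) * Polynomial.X ^ i)
    (hdeg : (a m).natDegree > m * d.natDegree + H1 a m) :
    Omega (f.map (algebraMap (Polynomial K) (RatFunc K))) ≤ Omega (a m / d) :=
  stmt2_general m a d ha0 ham hd f hf hdeg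
end

section
/- Let K be a field and f(X,Y) = a_0(X) + a_1(X)Y + ... + a_m(X)Y^m with a_0, ..., a_m ∈ K[X] and a_0·a_m ≠ 0. Suppose a_m = p·q with p, q ∈ K[X] and p irreducible over K. If deg p > (m-1)·deg q + H_1(f), then f(X,Y) is irreducible as a polynomial in Y over the field K(X). -/
/-!
Give `K[X]` the non-archimedean absolute value `v u = B ^ deg u` (the place at infinity) and
`K[X][Y]` the Gauss norm `‖∑ u_j Y^j‖ = max_j v(u_j) c^j`, which is multiplicative. For
`B = 2^m` and `c = 2^-(m·deg q + 1)` the hypothesis on `deg p` makes the leading term of `f`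
attain its Gauss norm. If `f = g h` over `K[X]` with, say, `p ∣ lc g`, multiplicativity forces
the leading term of `h` to attain the Gauss norm of `h`; but `deg (lc h) ≤ deg q`, so for
`deg_Y h ≥ 1` this term is smaller than the nonzero constant term `h(0)`. Hence `f` has no
factorization of positive degrees over `K[X]`, and Gauss's lemma transfers this to `K(X)`.
-/

open Polynomial

namespace Polynomial

section PowDegree

variable {R : Type*} [Semiring R] [NoZeroDivisors R]

noncomputable def powDegree (B : ℝ) (hB : 1 ≤ B) : AbsoluteValue R[X] ℝ :=
  letI := Classical.decEq R
  { toFun := fun p => if p = 0 then 0 else B ^ p.natDegree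
    nonneg' := fun p => by split_ifs <;> positivity
    eq_zero' := fun p => by
      split_ifs with hp <;> simp [hp, (by positivity : B ^ p.natDegree ≠ 0)]
    add_le' := fun p q => by
      by_cases hp : p = 0; · simp [hp]
      by_cases hq : q = 0; · simp [hq]
      split_ifs
      · positivity
      · exact (pow_le_pow_right₀ hB (natDegree_add_le p q)).trans (by
          rcases le_total p.natDegree q.natDegree with h | h <;> simp [h] <;> positivity)
    map_mul' := fun p q => by
      by_cases hp : p = 0; · simp [hp]
      by_cases hq : q = 0; · simp [hq]
      simp [hp, hq, natDegree_mul hp hq, pow_add] }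

variable {B : ℝ} (hB : 1 ≤ B)

theorem powDegree_of_ne_zero {p : R[X]} (hp : p ≠ 0) : powDegree B hB p = B ^ p.natDegree := by
  simp [powDegree, hp]

theorem powDegree_le (p : R[X]) : powDegree B hB p ≤ B ^ p.natDegree := by
  rcases eq_or_ne p 0 with rfl | hp
  · simp only [map_zero]; positivity
  · exact (powDegree_of_ne_zero hB hp).le

theorem isNonarchimedean_powDegree : IsNonarchimedean (powDegree (R := R) B hB) := by
  intro p q
  rcases eq_or_ne p 0 with rfl | hp
  · simp
  rcases eq_or_ne q 0 with rfl | hq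
  · simp
  rcases eq_or_ne (p + q) 0 with hpq | hpq
  · simp [hpq]
  rw [powDegree_of_ne_zero hB hpq, powDegree_of_ne_zero hB hp, powDegree_of_ne_zero hB hq,
    ← (pow_right_mono₀ hB).map_max]
  exact pow_le_pow_right₀ hB (natDegree_add_le p q)

end PowDegree

theorem gaussNorm_le_of_gaussNorm_mul_le {A : Type*} [Ring A] [NoZeroDivisors A]
    {v : AbsoluteValue A ℝ} (hv : IsNonarchimedean v) {c : ℝ} (hc : 0 < c) {g h : A[X]}
    (hg : g ≠ 0) (hgh : (g * h).gaussNorm v c ≤ v (g * h).leadingCoeff * c ^ (g * h).natDegree) :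
    h.gaussNorm v c ≤ v h.leadingCoeff * c ^ h.natDegree := by
  rcases eq_or_ne h 0 with rfl | hh
  · simp
  have hg_pos : 0 < g.gaussNorm v c := (gaussNorm_nonneg v g hc.le).lt_of_ne
    (Ne.symm ((gaussNorm_eq_zero_iff v g (fun _ => v.eq_zero.mp) hc).not.mpr hg))
  refine le_of_mul_le_mul_left ?_ hg_pos
  calc g.gaussNorm v c * h.gaussNorm v c = (g * h).gaussNorm v c :=
        (gaussNorm_mul hv hc g h).symm
    _ ≤ v (g * h).leadingCoeff * c ^ (g * h).natDegree := hgh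
    _ = v g.leadingCoeff * c ^ g.natDegree * (v h.leadingCoeff * c ^ h.natDegree) := by
      rw [leadingCoeff_mul, natDegree_mul hg hh, map_mul, pow_add]; ring
    _ ≤ g.gaussNorm v c * (v h.leadingCoeff * c ^ h.natDegree) := by
      gcongr
      exact le_gaussNorm v g hc.le _

theorem gaussNorm_powDegree_le {R : Type*} [Semiring R] [NoZeroDivisors R] {B c : ℝ}
    (hB : 1 ≤ B) (hc₀ : 0 ≤ c) (hc₁ : c ≤ 1) {f : R[X][X]} {H : ℕ}
    (hH : ∀ i < f.natDegree, (f.coeff i).natDegree ≤ H)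
    (hdom : B ^ H ≤ B ^ f.leadingCoeff.natDegree * c ^ f.natDegree) :
    f.gaussNorm (powDegree B hB) c ≤ powDegree B hB f.leadingCoeff * c ^ f.natDegree := by
  obtain ⟨i, hi⟩ := exists_eq_gaussNorm (powDegree B hB) c f
  rw [hi]
  rcases lt_trichotomy i f.natDegree with hlt | rfl | hgt
  · calc powDegree B hB (f.coeff i) * c ^ i ≤ B ^ H * 1 :=
          mul_le_mul ((powDegree_le hB _).trans (pow_le_pow_right₀ hB (hH i hlt)))
            (pow_le_one₀ hc₀ hc₁) (by positivity) (by positivity)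
      _ ≤ powDegree B hB f.leadingCoeff * c ^ f.natDegree := by
        have hf : f ≠ 0 := ne_zero_of_natDegree_gt hlt
        rwa [mul_one, powDegree_of_ne_zero hB (leadingCoeff_ne_zero.mpr hf)]
  · rfl
  · rw [coeff_eq_zero_of_natDegree_lt hgt, map_zero, zero_mul]
    positivity

theorem natDegree_eq_zero_of_gaussNorm_le {R : Type*} [Semiring R] [NoZeroDivisors R]
    {B c : ℝ} (hB : 1 ≤ B) (hc₀ : 0 ≤ c) (hc₁ : c ≤ 1) {h : R[X][X]} (hh₀ : h.coeff 0 ≠ 0)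
    (hN : h.gaussNorm (powDegree B hB) c ≤ powDegree B hB h.leadingCoeff * c ^ h.natDegree)
    (hsteep : B ^ h.leadingCoeff.natDegree * c < 1) :
    h.natDegree = 0 := by
  by_contra hs
  have := calc
    (1 : ℝ) ≤ powDegree B hB (h.coeff 0) * c ^ 0 := by
      rw [pow_zero, mul_one, powDegree_of_ne_zero hB hh₀]
      exact one_le_pow₀ hB
    _ ≤ h.gaussNorm (powDegree B hB) c := le_gaussNorm _ h hc₀ 0
    _ ≤ powDegree B hB h.leadingCoeff * c ^ h.natDegree := hN
    _ ≤ B ^ h.leadingCoeff.natDegree * c :=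
      mul_le_mul (powDegree_le hB _) (pow_le_of_le_one hc₀ hc₁ hs) (by positivity) (by positivity)
  exact (this.trans_lt hsteep).false

theorem natDegree_le_of_mul_eq_mul_of_dvd {R : Type*} [CommRing R] [IsDomain R]
    {a b p q : R[X]} (h : a * b = p * q) (hpa : p ∣ a) (hp : p ≠ 0) (hq : q ≠ 0) :
    b.natDegree ≤ q.natDegree := by
  obtain ⟨k, rfl⟩ := hpa
  have hkb : k * b = q := mul_left_cancel₀ hp (by rw [← mul_assoc, h])
  exact natDegree_le_of_dvd ⟨k, by rw [← hkb, mul_comm]⟩ hq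

theorem natDegree_eq_zero_of_mul_eq_of_dvd_leadingCoeff {R : Type*} [CommRing R] [IsDomain R]
    {f g h : R[X][X]} {p q : R[X]} {H : ℕ} (hfgh : f = g * h) (hf₀ : f.coeff 0 ≠ 0)
    (hlc : f.leadingCoeff = p * q) (hpg : p ∣ g.leadingCoeff)
    (hH : ∀ i < f.natDegree, (f.coeff i).natDegree ≤ H)
    (hdeg : (f.natDegree - 1) * q.natDegree + H < p.natDegree) :
    h.natDegree = 0 := by
  set n := f.natDegree
  set d := q.natDegree
  have hf : f ≠ 0 := fun h0 => hf₀ (by rw [h0, coeff_zero])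
  have hpq : p * q ≠ 0 := hlc ▸ leadingCoeff_ne_zero.mpr hf
  have hlc_h : h.leadingCoeff.natDegree ≤ d := natDegree_le_of_mul_eq_mul_of_dvd
    (by rw [← leadingCoeff_mul, ← hfgh, hlc]) hpg (left_ne_zero_of_mul hpq)
    (right_ne_zero_of_mul hpq)
  have hlc_f : n * d + H + 1 ≤ f.leadingCoeff.natDegree := by
    rw [hlc, natDegree_mul (left_ne_zero_of_mul hpq) (right_ne_zero_of_mul hpq)]
    rcases n with _ | k
    · omega
    · rw [Nat.add_sub_cancel] at hdeg
      rw [Nat.succ_mul]; omega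
  -- In base 2, `v (f_j) * c ^ j = 2 ^ (n * (deg f_j - (d + 1/n) * j))`: the slope `d + 1/n`
  -- makes the leading term of `f` dominant, yet is too steep for a factor `h` with `deg lc h ≤ d`.
  set B : ℝ := 2 ^ n
  set c : ℝ := (2 ^ (n * d + 1))⁻¹
  have hB : 1 ≤ B := one_le_pow₀ one_le_two
  have hc₀ : 0 < c := by positivity
  have hc₁ : c ≤ 1 := inv_le_one_of_one_le₀ (one_le_pow₀ one_le_two)
  have hdom : B ^ H ≤ B ^ f.leadingCoeff.natDegree * c ^ n := by
    simp only [B, c, ← pow_mul, inv_pow]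
    rw [le_mul_inv_iff₀ (by positivity), ← pow_add]
    exact pow_le_pow_right₀ one_le_two (by nlinarith)
  have hsteep : B ^ h.leadingCoeff.natDegree * c < 1 := calc
    B ^ h.leadingCoeff.natDegree * c ≤ B ^ d * c := by gcongr
    _ = 2⁻¹ := by
      simp only [B, c]
      rw [← pow_mul, pow_succ, mul_inv, ← mul_assoc, mul_inv_cancel₀ (by positivity), one_mul]
    _ < 1 := by norm_num
  refine natDegree_eq_zero_of_gaussNorm_le hB hc₀.le hc₁ ?_ ?_ hsteep
  · exact right_ne_zero_of_mul (by rwa [← mul_coeff_zero, ← hfgh])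
  · exact gaussNorm_le_of_gaussNorm_mul_le (isNonarchimedean_powDegree hB) hc₀
      (left_ne_zero_of_mul (hfgh ▸ hf))
      (hfgh ▸ gaussNorm_powDegree_le hB hc₀.le hc₁ hH hdom)

theorem IsPrimitive.isUnit_of_dvd_of_natDegree_eq_zero {R : Type*} [CommSemiring R]
    {P g : R[X]} (hP : P.IsPrimitive) (hg : g ∣ P) (hg₀ : g.natDegree = 0) : IsUnit g := by
  rw [eq_C_of_natDegree_eq_zero hg₀] at hg ⊢
  exact (hP _ hg).map C

theorem irreducible_map_fraction_map_of_forall_natDegree_eq_zero {R F : Type*} [CommRing R]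
    [IsDomain R] [NormalizedGCDMonoid R] [Field F] [Algebra R F] [IsFractionRing R F]
    {f : R[X]} (hf : 0 < f.natDegree)
    (hfac : ∀ g h : R[X], f = g * h → g.natDegree = 0 ∨ h.natDegree = 0) :
    Irreducible (f.map (algebraMap R F)) := by
  have hc : f.content ≠ 0 := content_eq_zero_iff.not.mpr (ne_zero_of_natDegree_gt hf)
  have hprim := f.isPrimitive_primPart
  have hirr : Irreducible f.primPart := by
    refine ⟨fun hu => ?_, fun g h hgh => ?_⟩
    · have := natDegree_eq_zero_of_isUnit hu
      rw [natDegree_primPart] at this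
      omega
    · have := hfac (C f.content * g) h (by rw [mul_assoc, ← hgh, ← eq_C_content_mul_primPart])
      rw [natDegree_C_mul hc] at this
      exact this.imp (hprim.isUnit_of_dvd_of_natDegree_eq_zero (hgh ▸ dvd_mul_right g h))
        (hprim.isUnit_of_dvd_of_natDegree_eq_zero (hgh ▸ dvd_mul_left h g))
  have hassoc : Associated (f.primPart.map (algebraMap R F)) (f.map (algebraMap R F)) := by
    conv_rhs => rw [f.eq_C_content_mul_primPart, Polynomial.map_mul, map_C]
    refine (associated_unit_mul_left _ _ (isUnit_C.mpr (isUnit_iff_ne_zero.mpr ?_))).symm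
    exact (map_ne_zero_iff _ (IsFractionRing.injective R F)).mpr hc
  exact hassoc.irreducible (hprim.irreducible_iff_irreducible_map_fraction_map.mp hirr)

end Polynomial

theorem stmt3 {K : Type*} [Field K] (m : ℕ) (hm : 0 < m)
    (a : ℕ → Polynomial K) (p q : Polynomial K)
    (ha0 : a 0 ≠ 0) (ham : a m ≠ 0)
    (hpq : a m = p * q) (hp : Irreducible p)
    (f : Polynomial (Polynomial K))
    (hf : f = ∑ i ∈ Finset.range (m + 1), Polynomial.C (a i) * Polynomial.X ^ i)
    (hdeg : p.natDegree > (m - 1) * q.natDegree + H1 a m) :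
    Irreducible (f.map (algebraMap (Polynomial K) (RatFunc K))) := by
  classical
  have hcoeff (i : ℕ) : f.coeff i = if i ≤ m then a i else 0 := by simp [hf]
  have hfm : f.coeff m = a m := by simp [hcoeff]
  have hdegf : f.natDegree = m := natDegree_eq_of_le_of_coeff_ne_zero
    (natDegree_le_iff_coeff_eq_zero.mpr fun i hi => by simp [hcoeff, not_le.mpr hi]) (hfm ▸ ham)
  have hlc : f.leadingCoeff = p * q := by rw [leadingCoeff, hdegf, hfm, hpq]
  have hf₀ : f.coeff 0 ≠ 0 := by simpa [hcoeff] using ha0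
  have hH : ∀ i < f.natDegree, (f.coeff i).natDegree ≤ H1 a m := fun i hi => by
    rw [hdegf] at hi
    rw [hcoeff, if_pos hi.le]
    exact Finset.le_sup (f := fun i => (a i).natDegree) (Finset.mem_range.mpr hi)
  have hdeg' : (f.natDegree - 1) * q.natDegree + H1 a m < p.natDegree := hdegf ▸ hdeg
  refine irreducible_map_fraction_map_of_forall_natDegree_eq_zero (hdegf ▸ hm) fun g h hgh => ?_
  have hdvd : p ∣ g.leadingCoeff * h.leadingCoeff := by
    rw [← leadingCoeff_mul, ← hgh, hlc]
    exact dvd_mul_right p q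
  rcases hp.prime.dvd_or_dvd hdvd with hpg | hph
  · exact .inr (natDegree_eq_zero_of_mul_eq_of_dvd_leadingCoeff hgh hf₀ hlc hpg hH hdeg')
  · exact .inl (natDegree_eq_zero_of_mul_eq_of_dvd_leadingCoeff (hgh.trans (mul_comm g h))
      hf₀ hlc hph hH hdeg')
end

section
/- Let m ≥ 2 and d ≥ 2 be integers, and let a_0(X), a_1(X), ..., a_{m-1}(X) ∈ ℚ[X] with a_0 ≠ 0 and deg a_i ≤ d - 1 for all 0 ≤ i ≤ m-1. Then the polynomial f(X,Y) = a_0(X) + a_1(X)Y + ... + a_{m-1}(X)Y^{m-1} + (X^d + 5X + 5)Y^m is irreducible as a polynomial in Y over the field ℚ(X). -/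
/-!
Write `f = g * h` in `ℚ[X][Y]`. The leading coefficients in `Y` multiply to the irreducible
`p = X ^ d + 5 * X + 5`, so one of them, say that of `h`, is a nonzero constant. The `X`-degree
(the degree of `swap f` as a polynomial in `X` over `ℚ[Y]`) is additive, and `f` has `X`-degree
`d = deg p`, already attained by the leading coefficient of `g`; hence `h` lies in `ℚ[Y]`. Then
`h` divides the coefficient of `X ^ d` in `f`, which is `Y ^ m`, so a nonconstant `h` would be
divisible by `Y` and force `a₀ = f(X, 0) = 0`. Gauss's lemma passes from `ℚ[X][Y]` to `ℚ(X)[Y]`,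
and `p` is irreducible by Eisenstein's criterion at `5`.
-/

open Polynomial Polynomial.Bivariate

namespace Polynomial.Bivariate

variable {R : Type*} [CommRing R]

theorem coeff_coeff_swap (p : R[X][Y]) (i j : ℕ) :
    ((swap p).coeff i).coeff j = (p.coeff j).coeff i := by
  induction p using Polynomial.induction_on' with
  | add p q hp hq => simp only [map_add, coeff_add, hp, hq]
  | monomial n a =>
    induction a using Polynomial.induction_on' with
    | add a b ha hb => simp only [map_add, coeff_add, ha, hb]
    | monomial k r =>
      rw [swap_monomial_monomial]
      simp only [coeff_monomial]
      split_ifs <;> simp [coeff_monomial, *]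

theorem natDegree_coeff_le_natDegree_swap (p : R[X][Y]) (j : ℕ) :
    (p.coeff j).natDegree ≤ (swap p).natDegree := by
  rw [natDegree_le_iff_coeff_eq_zero]
  intro i hi
  rw [← coeff_coeff_swap, coeff_eq_zero_of_natDegree_lt hi, coeff_zero]

theorem natDegree_swap_le_iff (p : R[X][Y]) (n : ℕ) :
    (swap p).natDegree ≤ n ↔ ∀ j, (p.coeff j).natDegree ≤ n := by
  refine ⟨fun h j => (natDegree_coeff_le_natDegree_swap p j).trans h, fun h => ?_⟩
  rw [natDegree_le_iff_coeff_eq_zero]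
  intro i hi
  ext j
  rw [coeff_coeff_swap, coeff_zero]
  exact coeff_eq_zero_of_natDegree_lt ((h j).trans_lt hi)

variable [IsDomain R] {f g h : R[X][Y]}

theorem natDegree_swap_eq_zero_of_mul (hfgh : f = g * h) (hf0 : f ≠ 0)
    (hlc : IsUnit h.leadingCoeff)
    (hdeg : (swap f).natDegree ≤ f.leadingCoeff.natDegree) :
    (swap h).natDegree = 0 := by
  have hg0 : g ≠ 0 := by rintro rfl; simp_all
  have hh0 : h ≠ 0 := by rintro rfl; simp_all
  have hlcg : f.leadingCoeff.natDegree = g.leadingCoeff.natDegree := by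
    rw [hfgh, leadingCoeff_mul, natDegree_mul (leadingCoeff_ne_zero.mpr hg0)
      (leadingCoeff_ne_zero.mpr hh0), natDegree_eq_zero_of_isUnit hlc, add_zero]
  have hsum : (swap f).natDegree = (swap g).natDegree + (swap h).natDegree := by
    rw [hfgh, map_mul, natDegree_mul] <;> simpa
  have := natDegree_coeff_le_natDegree_swap g g.natDegree
  rw [← leadingCoeff] at this
  omega

theorem isUnit_of_mul_of_isUnit_leadingCoeff (hfgh : f = g * h) (hf0 : f.coeff 0 ≠ 0)
    (hlc : IsUnit h.leadingCoeff)
    (hdeg : (swap f).natDegree ≤ f.leadingCoeff.natDegree)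
    (hcorner : (swap f).coeff f.leadingCoeff.natDegree = X ^ f.natDegree) :
    IsUnit h := by
  obtain ⟨q, hq⟩ : ∃ q : R[X], swap h = C q :=
    ⟨_, eq_C_of_natDegree_eq_zero <| natDegree_swap_eq_zero_of_mul hfgh
      (fun h0 => hf0 (by simp [h0])) hlc hdeg⟩
  have hh : h = q.map C := by rw [← swap_C, ← hq, swap_swap_apply]
  have hqX : q ∣ X ^ f.natDegree := by
    rw [← hcorner, hfgh, map_mul, hq, coeff_mul_C]
    exact dvd_mul_left q _
  by_contra hnu
  have hqnu : ¬IsUnit q := fun hu => hnu (hh ▸ hu.map (mapRingHom C))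
  obtain ⟨i, -, hi⟩ := (dvd_prime_pow prime_X _).mp hqX
  have hi0 : i ≠ 0 := by rintro rfl; exact hqnu (by simpa using hi)
  have hq0 : q.coeff 0 = 0 := X_dvd_iff.mp ((dvd_pow_self X hi0).trans hi.symm.dvd)
  exact hf0 (by rw [hfgh, mul_coeff_zero, hh, coeff_map, hq0, map_zero, mul_zero])

theorem irreducible_of_irreducible_leadingCoeff (hlc : Irreducible f.leadingCoeff)
    (hdeg : (swap f).natDegree ≤ f.leadingCoeff.natDegree)
    (hcorner : (swap f).coeff f.leadingCoeff.natDegree = X ^ f.natDegree)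
    (hf0 : f.coeff 0 ≠ 0) : Irreducible f where
  not_isUnit hu := by
    obtain ⟨r, hr, rfl⟩ := Polynomial.isUnit_iff.mp hu
    exact hlc.not_isUnit (by simpa using hr)
  isUnit_or_isUnit g h hfgh := by
    have hsplit : f.leadingCoeff = g.leadingCoeff * h.leadingCoeff := by
      rw [hfgh, leadingCoeff_mul]
    rcases hlc.isUnit_or_isUnit hsplit with hg | hh
    · exact .inl (isUnit_of_mul_of_isUnit_leadingCoeff (hfgh.trans (mul_comm g h)) hf0 hg
        hdeg hcorner)
    · exact .inr (isUnit_of_mul_of_isUnit_leadingCoeff hfgh hf0 hh hdeg hcorner)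

end Polynomial.Bivariate

section

variable {S : Type*} [CommRing S] {d : ℕ}

theorem monic_X_pow_add_five_mul_X_add_five (hd : 2 ≤ d) : (X ^ d + 5 * X + 5 : S[X]).Monic := by
  monicity!
  rw [if_pos (by omega), if_neg (by omega)]
  simp

theorem natDegree_X_pow_add_five_mul_X_add_five [Nontrivial S] (hd : 2 ≤ d) :
    (X ^ d + 5 * X + 5 : S[X]).natDegree = d := by
  rw [add_assoc, natDegree_add_eq_left_of_natDegree_lt] <;> rw [natDegree_X_pow]
  exact natDegree_linear_le.trans_lt (by omega)

theorem coeff_X_pow_add_five_mul_X_add_five {n : ℕ} (hn : n < d) :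
    (X ^ d + 5 * X + 5 : S[X]).coeff n = if n ≤ 1 then 5 else 0 := by
  rcases n with _ | _ | n <;> simp [coeff_X_pow, coeff_X, ← map_ofNat C] <;> omega

end

theorem irreducible_X_pow_add_five_mul_X_add_five {d : ℕ} (hd : 2 ≤ d) :
    Irreducible (X ^ d + 5 * X + 5 : ℚ[X]) := by
  have hmonic := monic_X_pow_add_five_mul_X_add_five (S := ℤ) hd
  have hdeg := natDegree_X_pow_add_five_mul_X_add_five (S := ℤ) hd
  have h5 : (Ideal.span {(5 : ℤ)}).IsPrime :=
    (Ideal.span_singleton_prime (by norm_num)).mpr (by norm_num)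
  have hZ : Irreducible (X ^ d + 5 * X + 5 : ℤ[X]) := by
    refine (hmonic.isEisensteinAt_of_mem_of_notMem h5.ne_top (fun hn => ?_) ?_).irreducible h5
      hmonic.isPrimitive (by omega)
    · rw [hdeg] at hn
      rw [coeff_X_pow_add_five_mul_X_add_five hn, Ideal.mem_span_singleton]
      split_ifs <;> simp
    · rw [coeff_X_pow_add_five_mul_X_add_five (by omega), if_pos (by omega),
        Ideal.span_singleton_pow, Ideal.mem_span_singleton]
      norm_num
  simpa using (IsPrimitive.Int.irreducible_iff_irreducible_map_cast hmonic.isPrimitive).mp hZ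

section

variable {R : Type*} [Semiring R] (a : ℕ → R) (p : R) (m : ℕ)

theorem coeff_sum_C_mul_X_pow_add_C_mul_X_pow (j : ℕ) :
    (∑ i ∈ Finset.range m, C (a i) * X ^ i + C p * X ^ m).coeff j =
      if j < m then a j else if j = m then p else 0 := by
  simp only [coeff_add, finsetSum_coeff, coeff_C_mul, coeff_X_pow, mul_ite, mul_one, mul_zero,
    Finset.sum_ite_eq, Finset.mem_range]
  split_ifs <;> first | omega | simp_all

variable {p}

theorem natDegree_sum_C_mul_X_pow_add_C_mul_X_pow (hp : p ≠ 0) :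
    (∑ i ∈ Finset.range m, C (a i) * X ^ i + C p * X ^ m).natDegree = m := by
  refine natDegree_eq_of_le_of_coeff_ne_zero (natDegree_le_iff_coeff_eq_zero.mpr fun j hj => ?_) ?_
  · rw [coeff_sum_C_mul_X_pow_add_C_mul_X_pow, if_neg (by omega), if_neg (by omega)]
  · rwa [coeff_sum_C_mul_X_pow_add_C_mul_X_pow, if_neg (lt_irrefl m), if_pos rfl]

theorem leadingCoeff_sum_C_mul_X_pow_add_C_mul_X_pow (hp : p ≠ 0) :
    (∑ i ∈ Finset.range m, C (a i) * X ^ i + C p * X ^ m).leadingCoeff = p := by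
  rw [leadingCoeff, natDegree_sum_C_mul_X_pow_add_C_mul_X_pow a m hp,
    coeff_sum_C_mul_X_pow_add_C_mul_X_pow, if_neg (lt_irrefl m), if_pos rfl]

end

section

variable {R : Type*} [CommRing R] (a : ℕ → R[X]) {p : R[X]} {m n : ℕ}

theorem natDegree_swap_sum_C_mul_X_pow_add_C_mul_X_pow_le (ha : ∀ i < m, (a i).natDegree ≤ n)
    (hp : p.natDegree ≤ n) :
    (swap (∑ i ∈ Finset.range m, C (a i) * Y ^ i + C p * Y ^ m)).natDegree ≤ n := by
  rw [natDegree_swap_le_iff]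
  intro j
  rw [coeff_sum_C_mul_X_pow_add_C_mul_X_pow]
  split_ifs with hjm
  · exact ha j hjm
  · exact hp
  · simp

theorem coeff_swap_sum_C_mul_X_pow_add_C_mul_X_pow (ha : ∀ i < m, (a i).natDegree < n)
    (hp : p.coeff n = 1) :
    (swap (∑ i ∈ Finset.range m, C (a i) * Y ^ i + C p * Y ^ m)).coeff n = X ^ m := by
  ext j : 1
  rw [coeff_coeff_swap, coeff_sum_C_mul_X_pow_add_C_mul_X_pow, coeff_X_pow]
  split_ifs with hlt heq
  · omega
  · exact coeff_eq_zero_of_natDegree_lt (ha j hlt)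
  · exact hp
  · exact coeff_zero n

end

theorem stmt8 (m d : ℕ) (hm : 2 ≤ m) (hd : 2 ≤ d)
    (a : ℕ → Polynomial ℚ) (ha0 : a 0 ≠ 0)
    (hdeg : ∀ i ≤ m - 1, (a i).natDegree ≤ d - 1)
    (f : Polynomial (Polynomial ℚ))
    (hf : f = (∑ i ∈ Finset.range m, Polynomial.C (a i) * Polynomial.X ^ i)
        + Polynomial.C ((Polynomial.X : Polynomial ℚ) ^ d + 5 * Polynomial.X + 5)
            * Polynomial.X ^ m) :
    Irreducible (f.map (algebraMap (Polynomial ℚ) (RatFunc ℚ))) := by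
  set p : ℚ[X] := X ^ d + 5 * X + 5
  have hpm : p.Monic := monic_X_pow_add_five_mul_X_add_five hd
  have hp0 : p ≠ 0 := hpm.ne_zero
  have hpd : p.natDegree = d := natDegree_X_pow_add_five_mul_X_add_five hd
  have hnat : f.natDegree = m := hf ▸ natDegree_sum_C_mul_X_pow_add_C_mul_X_pow a m hp0
  have hlc : f.leadingCoeff = p := hf ▸ leadingCoeff_sum_C_mul_X_pow_add_C_mul_X_pow a m hp0
  have hirr : Irreducible f := by
    refine irreducible_of_irreducible_leadingCoeff ?_ ?_ ?_ ?_
    · rw [hlc]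
      exact irreducible_X_pow_add_five_mul_X_add_five hd
    · rw [hlc, hpd, hf]
      exact natDegree_swap_sum_C_mul_X_pow_add_C_mul_X_pow_le a
        (fun i hi => (hdeg i (by omega)).trans (by omega)) hpd.le
    · rw [hlc, hpd, hnat, hf]
      exact coeff_swap_sum_C_mul_X_pow_add_C_mul_X_pow a
        (fun i hi => (hdeg i (by omega)).trans_lt (by omega)) (hpd ▸ hpm.coeff_natDegree)
    · rw [hf, coeff_sum_C_mul_X_pow_add_C_mul_X_pow, if_pos (by omega)]
      exact ha0
  exact (hirr.isPrimitive (by omega)).irreducible_iff_irreducible_map_fraction_map.mp hirr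
end

section
/- Let m, n ≥ 2 be integers, and let a_0(X), ..., a_{m-1}(X), b_0(X), ..., b_{n-1}(X) ∈ ℚ[X] with a_0 ≠ 0 and deg a_i ≤ 2n - 1 for all 0 ≤ i ≤ m-1. Set f(X,Y) = a_0 + a_1 Y + ... + a_{m-1} Y^{m-1} + (X^n + 5X + 5)² Y^m and g(X,Y) = b_0 + b_1 Y + ... + b_{n-1} Y^{n-1} + Y^n. Then the polynomial f(X, g(X,Y)) has at most two irreducible factors over ℚ(X), counted with multiplicity. -/
/-!
Let `h = f(X, g(X, Y))`, a polynomial in `Y` over `ℚ[X]` with leading coefficient `p²`, where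
`p = Xⁿ + 5X + 5` is irreducible (Eisenstein at 5). By Gauss's lemma the irreducible factors of
`h` over `ℚ(X)` are those of positive `Y`-degree of `h` in `ℚ[X][Y]`. If there were three of
them, their leading coefficients would multiply to a divisor of `p²`, so one of them would be a
unit and `h` would have a monic factor `P`. A root `θ` of `P` is integral over `ℚ[X]`, hence so
is `g(θ)`, a root of `f`, and its minimal polynomial is a monic factor `μ` of `f` of positive
degree.

No such factor exists. Give `X^u Y^j` the weight `N u - j`, where `N = deg_Y f`. Since the leading
coefficient of `f` has larger `X`-degree `k` than all the other coefficients, the weights of the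
monomials of `f` are at most `N (k - 1)`. If `f = μ G`, then `G` has the leading coefficient of
`f`, hence a monomial of weight `N k - deg G`, and `μ(0) ≠ 0` gives `μ` a monomial of weight
`≥ 0`. Top weights add in products, so `f` would have a monomial of weight `≥ N k - N + deg μ`.
-/

open Polynomial

theorem Omega_eq_card_of_associated {α : Type*} [CommMonoidWithZero α] [Nontrivial α]
    [UniqueFactorizationMonoid α] {x : α} {s : Multiset α} (hs : ∀ q ∈ s, Irreducible q)
    (hx : Associated s.prod x) : Omega x = Multiset.card s := by
  have hx0 : x ≠ 0 := hx.ne_zero_iff.mp (Multiset.prod_ne_zero fun h0 => (hs 0 h0).ne_zero rfl)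
  exact Multiset.card_eq_card_of_rel <| UniqueFactorizationMonoid.factors_unique
    (fun q hq => UniqueFactorizationMonoid.irreducible_of_factor q hq) hs
    ((UniqueFactorizationMonoid.factors_prod hx0).trans hx.symm)

theorem Multiset.exists_isUnit_of_prod_dvd_prime_pow {α : Type*} [CommMonoidWithZero α]
    [IsCancelMulZero α] {p : α} (hp : Prime p) {s : Multiset α} {k : ℕ} (hs : s.prod ∣ p ^ k)
    (hk : k < Multiset.card s) : ∃ x ∈ s, IsUnit x := by
  by_contra! hunit
  have hdvd : ∀ x ∈ s, p ∣ x := fun x hx => by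
    obtain ⟨i, -, hi⟩ := (dvd_prime_pow hp k).mp ((Multiset.dvd_prod hx).trans hs)
    rcases i with _ | i
    · rw [pow_zero, associated_one_iff_isUnit] at hi
      exact absurd hi (hunit x hx)
    · exact (dvd_pow_self p i.succ_ne_zero).trans hi.symm.dvd
  have hpow : p ^ Multiset.card s ∣ s.prod := by
    simpa using Multiset.prod_dvd_prod_of_dvd (fun _ => p) id hdvd
  exact hk.not_ge ((pow_dvd_pow_iff hp.ne_zero hp.not_isUnit).mp (hpow.trans hs))

section FractionField

variable {R K : Type*} [CommRing R] [IsDomain R] [UniqueFactorizationMonoid R] [Field K]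
  [Algebra R K] [IsFractionRing R K]

open UniqueFactorizationMonoid in
theorem Omega_map_eq_card_filter_factors {h : R[X]} (hh : h ≠ 0) :
    Omega (h.map (algebraMap R K)) = Multiset.card ((factors h).filter (0 < natDegree ·)) := by
  have hinj := IsFractionRing.injective R K
  set ψ := mapRingHom (algebraMap R K)
  have hpos : ∀ q ∈ (factors h).filter (0 < natDegree ·), Irreducible (ψ q) := by
    intro q hq
    rw [Multiset.mem_filter] at hq
    have hirr := irreducible_of_factor q hq.1
    exact ((hirr.isPrimitive hq.2.ne').irreducible_iff_irreducible_map_fraction_map).mp hirr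
  have hzero : ∀ q ∈ (factors h).filter (¬ 0 < natDegree ·), IsUnit (ψ q) := by
    intro q hq
    rw [Multiset.mem_filter, not_lt, Nat.le_zero] at hq
    rw [isUnit_iff_degree_eq_zero, coe_mapRingHom, degree_map_eq_of_injective hinj,
      degree_eq_natDegree (irreducible_of_factor q hq.1).ne_zero, hq.2, Nat.cast_zero]
  rw [← Multiset.card_map ψ]
  refine Omega_eq_card_of_associated (Multiset.forall_mem_map_iff.mpr hpos) ?_
  have hunit : IsUnit (((factors h).filter (¬ 0 < natDegree ·)).map ψ).prod :=
    Multiset.prod_induction IsUnit _ (fun _ _ => IsUnit.mul) isUnit_one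
      (Multiset.forall_mem_map_iff.mpr hzero)
  refine (associated_mul_unit_right _ _ hunit).trans ?_
  rw [← Multiset.prod_add, ← Multiset.map_add, Multiset.filter_add_not, ← map_multiset_prod]
  exact (factors_prod hh).map ψ

theorem exists_monic_dvd_of_leadingCoeff_eq_prime_pow {h : R[X]} {p : R} (hp : Prime p) {k : ℕ}
    (hlc : h.leadingCoeff = p ^ k) (hk : k < Omega (h.map (algebraMap R K))) :
    ∃ P : R[X], P.Monic ∧ 0 < P.natDegree ∧ P ∣ h := by
  have hh : h ≠ 0 := leadingCoeff_ne_zero.mp (hlc ▸ pow_ne_zero k hp.ne_zero)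
  set F := (UniqueFactorizationMonoid.factors h).filter (0 < natDegree ·)
  have hFh : F.prod ∣ h := (Multiset.prod_dvd_prod_of_le (Multiset.filter_le _ _)).trans
    (UniqueFactorizationMonoid.factors_prod hh).dvd
  have hFlc : (F.map leadingCoeff).prod ∣ p ^ k := by
    rw [← hlc, ← leadingCoeff_multiset_prod]
    exact leadingCoeff_dvd_leadingCoeff hFh
  rw [Omega_map_eq_card_filter_factors hh, ← Multiset.card_map leadingCoeff] at hk
  obtain ⟨_, hc, ⟨u, hu⟩⟩ := Multiset.exists_isUnit_of_prod_dvd_prime_pow hp hFlc hk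
  obtain ⟨q, hqF, rfl⟩ := Multiset.mem_map.mp hc
  have hq := Multiset.mem_filter.mp hqF
  refine ⟨C ↑u⁻¹ * q, monic_C_mul_of_mul_leadingCoeff_eq_one (by rw [← hu, Units.inv_mul]),
    by rw [natDegree_C_mul u⁻¹.ne_zero]; exact hq.2, ?_⟩
  exact ((isUnit_C.mpr u⁻¹.isUnit).mul_left_dvd).mpr ((Multiset.dvd_prod hqF).trans hFh)

end FractionField

theorem exists_monic_dvd_of_monic_dvd_comp {R : Type*} [CommRing R] [IsDomain R]
    [IsIntegrallyClosed R] {f g P : R[X]} (hP : P.Monic) (hPd : 0 < P.natDegree)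
    (hdvd : P ∣ f.comp g) : ∃ μ : R[X], μ.Monic ∧ 0 < μ.natDegree ∧ μ ∣ f := by
  let L := AlgebraicClosure (FractionRing R)
  have : Module.IsTorsionFree R L := Module.isTorsionFree_iff_algebraMap_injective.mpr <| by
    rw [IsScalarTower.algebraMap_eq R (FractionRing R) L]
    exact (algebraMap _ L).injective.comp (IsFractionRing.injective R (FractionRing R))
  obtain ⟨θ, hθ⟩ :=
    IsAlgClosed.exists_aeval_eq_zero L P (natDegree_pos_iff_degree_pos.mp hPd).ne'
  have hγ : IsIntegral R (aeval θ g) :=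
    adjoin_le_integralClosure ⟨P, hP, hθ⟩ (aeval_mem_adjoin_singleton R θ)
  refine ⟨minpoly R (aeval θ g), minpoly.monic hγ, minpoly.natDegree_pos hγ,
    minpoly.isIntegrallyClosed_dvd hγ ?_⟩
  obtain ⟨Q, hQ⟩ := hdvd
  rw [← aeval_comp, hQ, map_mul, hθ, zero_mul]

section WeightedSubst

variable {R : Type*} [CommRing R]

/-- `X ↦ X * Y ^ w` on `R[X][Y]`: it sends `X^u Y^j` to `X^u Y^(j + w u)`, so the `Y`-degree of
the image is the weighted degree with weight `w` on `X` and `1` on `Y`. -/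
noncomputable def weightedSubst (w : ℕ) : R[X][X] →+* R[X][X] :=
  eval₂RingHom (aeval (C X * X ^ w : R[X][X])).toRingHom X

theorem weightedSubst_monomial_monomial (w j u : ℕ) (c : R) :
    weightedSubst w (monomial j (monomial u c)) = monomial (j + w * u) (monomial u c) := by
  simp only [weightedSubst, ← C_mul_X_pow_eq_monomial, coe_eval₂RingHom, eval₂_C,
    AlgHom.toRingHom_eq_coe, RingHom.coe_coe, map_mul, map_pow, aeval_C, aeval_X,
    eval₂_X, Polynomial.algebraMap_apply, Algebra.algebraMap_self, RingHom.id_apply]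
  ring

theorem coeff_coeff_weightedSubst (w : ℕ) (Q : R[X][X]) (t u : ℕ) :
    ((weightedSubst w Q).coeff t).coeff u =
      if w * u ≤ t then (Q.coeff (t - w * u)).coeff u else 0 := by
  induction Q using Polynomial.induction_on' with
  | add P Q hP hQ => simp only [map_add, coeff_add, hP, hQ]; split_ifs <;> simp
  | monomial j q =>
    induction q using Polynomial.induction_on' with
    | add q r hq hr => simp only [map_add, coeff_add, hq, hr]; split_ifs <;> simp
    | monomial v c =>
      simp only [weightedSubst_monomial_monomial, coeff_monomial]
      split_ifs <;> simp only [coeff_monomial, coeff_zero] <;> split_ifs <;>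
        first | rfl | (subst_vars; omega)

theorem coeff_weightedSubst_ne_zero {w j u : ℕ} {Q : R[X][X]} (h : (Q.coeff j).coeff u ≠ 0) :
    (weightedSubst w Q).coeff (w * u + j) ≠ 0 := fun h0 => h <| by
  simpa [h0] using (coeff_coeff_weightedSubst w Q (w * u + j) u).symm

theorem natDegree_weightedSubst_le {w N : ℕ} {Q : R[X][X]}
    (h : ∀ j u, (Q.coeff j).coeff u ≠ 0 → w * u + j ≤ N) :
    (weightedSubst w Q).natDegree ≤ N := by
  refine natDegree_le_iff_coeff_eq_zero.mpr fun t ht => Polynomial.ext fun u => ?_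
  rw [coeff_coeff_weightedSubst, coeff_zero]
  split_ifs with hu
  · by_contra hne
    have := h _ _ hne
    omega
  · rfl

variable [IsDomain R]

theorem not_monic_dvd_of_natDegree_coeff_lt {f μ : R[X][X]}
    (hcoeff : ∀ i < f.natDegree, (f.coeff i).natDegree < f.leadingCoeff.natDegree)
    (h0 : f.coeff 0 ≠ 0) (hμ : μ.Monic) (hμd : 0 < μ.natDegree) : ¬ μ ∣ f := by
  rintro ⟨G, rfl⟩
  -- Reversing in `Y` replaces the weight `N u - j` by `N u + (N - j)`, which is the `Y`-degree
  -- after `weightedSubst N`.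
  set N := (μ * G).natDegree
  set k := (μ * G).leadingCoeff.natDegree
  have hupper : (weightedSubst N (μ * G).reverse).natDegree ≤ N * k := by
    refine natDegree_weightedSubst_le fun j u hne => ?_
    have hjN : j ≤ N := (le_natDegree_of_ne_zero fun h => hne (by rw [h, coeff_zero])).trans
      (reverse_natDegree_le _)
    rw [coeff_reverse, revAt_le hjN] at hne
    have hu := le_natDegree_of_ne_zero hne
    rcases j.eq_zero_or_pos with rfl | hj
    · exact Nat.mul_le_mul_left N hu
    · have := hcoeff (N - j) (by omega)
      nlinarith
  have hμc : (μ.reverse.coeff μ.natDegree).coeff (μ.coeff 0).natDegree ≠ 0 := by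
    rw [coeff_reverse, revAt_le le_rfl, Nat.sub_self, ← leadingCoeff, leadingCoeff_ne_zero]
    exact fun h => h0 (by rw [mul_coeff_zero, h, zero_mul])
  have hGc : (G.reverse.coeff 0).coeff k ≠ 0 := by
    rw [coeff_zero_reverse, ← leadingCoeff_monic_mul hμ, ← leadingCoeff, leadingCoeff_ne_zero,
      leadingCoeff_ne_zero]
    exact fun h => h0 (by rw [h, coeff_zero])
  have hμw := coeff_weightedSubst_ne_zero (w := N) hμc
  have hGw := coeff_weightedSubst_ne_zero (w := N) hGc
  rw [reverse_mul_of_domain, map_mul, natDegree_mul (fun h => hμw (by rw [h, coeff_zero]))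
    (fun h => hGw (by rw [h, coeff_zero]))] at hupper
  have hμdeg := le_natDegree_of_ne_zero hμw
  have hGdeg := le_natDegree_of_ne_zero hGw
  omega

end WeightedSubst

section Trinomial

variable {R : Type*} [Semiring R] {n : ℕ}

theorem degree_C_mul_X_add_C_lt (hn : 2 ≤ n) (a b : R) :
    (C a * X + C b).degree < (n : WithBot ℕ) :=
  degree_linear_le.trans_lt (by exact_mod_cast (by omega : 1 < n))

theorem monic_X_pow_add_C_mul_X_add_C (hn : 2 ≤ n) (a b : R) :
    (X ^ n + C a * X + C b).Monic := by
  rw [add_assoc]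
  exact monic_X_pow_add (degree_C_mul_X_add_C_lt hn a b)

theorem natDegree_X_pow_add_C_mul_X_add_C [Nontrivial R] (hn : 2 ≤ n) (a b : R) :
    (X ^ n + C a * X + C b).natDegree = n := by
  rw [add_assoc, natDegree_add_eq_left_of_degree_lt 
    ((degree_C_mul_X_add_C_lt hn a b).trans_eq (degree_X_pow n).symm), natDegree_X_pow]

end Trinomial

theorem irreducible_X_pow_add_C_mul_X_add_C {ℓ : ℤ} (hℓ : Prime ℓ) {n : ℕ}
    (hn : 2 ≤ n) :
    Irreducible (X ^ n + C (ℓ : ℚ) * X + C (ℓ : ℚ)) := by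
  have hmon := monic_X_pow_add_C_mul_X_add_C hn ℓ ℓ
  have hdeg : (X ^ n + C ℓ * X + C ℓ).degree = (n : WithBot ℕ) := by
    rw [degree_eq_natDegree hmon.ne_zero, natDegree_X_pow_add_C_mul_X_add_C hn]
  have hirr : Irreducible (X ^ n + C ℓ * X + C ℓ) := by
    refine irreducible_of_eisenstein_criterion ((Ideal.span_singleton_prime hℓ.ne_zero).mpr hℓ)
      ?_ (fun i hi => ?_) ?_ ?_ hmon.isPrimitive
    · rw [hmon.leadingCoeff, Ideal.mem_span_singleton]
      exact hℓ.not_dvd_one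
    · rw [hdeg, Nat.cast_lt] at hi
      simp only [Ideal.mem_span_singleton, coeff_add, coeff_X_pow, coeff_C_mul_X, coeff_C,
        if_neg hi.ne]
      split_ifs <;> simp
    · rw [hdeg]
      exact_mod_cast (by omega : 0 < n)
    · rw [Ideal.span_singleton_pow, Ideal.mem_span_singleton]
      simp only [coeff_add, coeff_X_pow, coeff_C_mul_X, coeff_C,
        if_neg (by omega : (0 : ℕ) ≠ n), if_neg zero_ne_one, zero_add]
      simpa using
        (pow_dvd_pow_iff (n := 2) (m := 1) hℓ.ne_zero hℓ.not_isUnit).not.mpr (by norm_num)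
  simpa using (hmon.irreducible_iff_irreducible_map_fraction_map (K := ℚ)).mp hirr

section SumRange

variable {S : Type*} [Semiring S] (c : ℕ → S)

theorem degree_sum_range_C_mul_X_pow_lt (m : ℕ) :
    (∑ i ∈ Finset.range m, C (c i) * X ^ i).degree < (m : WithBot ℕ) := by
  rw [Finset.sum_range fun i => C (c i) * X ^ i]
  exact degree_sum_fin_lt _

theorem coeff_sum_range_add_C_mul_X_pow_of_lt (d : S) {m i : ℕ} (hi : i < m) :
    (∑ j ∈ Finset.range m, C (c j) * X ^ j + C d * X ^ m).coeff i = c i := by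
  simp [finsetSum_coeff, hi, hi.ne]

theorem natDegree_sum_range_add_C_mul_X_pow {d : S} (hd : d ≠ 0) (m : ℕ) :
    (∑ i ∈ Finset.range m, C (c i) * X ^ i + C d * X ^ m).natDegree = m := by
  rw [natDegree_add_eq_right_of_degree_lt 
    ((degree_sum_range_C_mul_X_pow_lt c m).trans_eq (degree_C_mul_X_pow m hd).symm),
    natDegree_C_mul_X_pow m d hd]

theorem leadingCoeff_sum_range_add_C_mul_X_pow {d : S} (hd : d ≠ 0) (m : ℕ) :
    (∑ i ∈ Finset.range m, C (c i) * X ^ i + C d * X ^ m).leadingCoeff = d := by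
  rw [leadingCoeff_add_of_degree_lt 
    ((degree_sum_range_C_mul_X_pow_lt c m).trans_eq (degree_C_mul_X_pow m hd).symm),
    leadingCoeff_C_mul_X_pow]

theorem monic_sum_range_add_X_pow (n : ℕ) :
    (∑ i ∈ Finset.range n, C (c i) * X ^ i + X ^ n).Monic := by
  rw [add_comm]
  exact monic_X_pow_add (degree_sum_range_C_mul_X_pow_lt c n)

theorem natDegree_sum_range_add_X_pow [Nontrivial S] (n : ℕ) :
    (∑ i ∈ Finset.range n, C (c i) * X ^ i + X ^ n).natDegree = n := by
  rw [natDegree_add_eq_right_of_degree_lt 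
    ((degree_sum_range_C_mul_X_pow_lt c n).trans_eq (degree_X_pow n).symm), natDegree_X_pow]

end SumRange

theorem stmt10 (m n : ℕ) (hm : 2 ≤ m) (hn : 2 ≤ n)
    (a b : ℕ → Polynomial ℚ) (ha0 : a 0 ≠ 0)
    (hdeg : ∀ i ≤ m - 1, (a i).natDegree ≤ 2 * n - 1)
    (f g : Polynomial (Polynomial ℚ))
    (hf : f = (∑ i ∈ Finset.range m, Polynomial.C (a i) * Polynomial.X ^ i)
        + Polynomial.C (((Polynomial.X : Polynomial ℚ) ^ n + 5 * Polynomial.X + 5) ^ 2)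
            * Polynomial.X ^ m)
    (hg : g = (∑ j ∈ Finset.range n, Polynomial.C (b j) * Polynomial.X ^ j)
        + Polynomial.X ^ n) :
    Omega ((Polynomial.aeval g f).map (algebraMap (Polynomial ℚ) (RatFunc ℚ))) ≤ 2 := by
  rw [show (5 : ℚ[X]) = C 5 from (map_ofNat C 5).symm] at hf
  set p : ℚ[X] := X ^ n + C 5 * X + C 5
  have hp : Prime p := by
    simpa using (irreducible_X_pow_add_C_mul_X_add_C (ℓ := 5)
      (Int.prime_iff_natAbs_prime.mpr (by norm_num)) hn).prime
  have hp2 : p ^ 2 ≠ 0 := pow_ne_zero 2 hp.ne_zero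
  have hfdeg : f.natDegree = m := hf ▸ natDegree_sum_range_add_C_mul_X_pow a hp2 m
  have hflc : f.leadingCoeff = p ^ 2 := hf ▸ leadingCoeff_sum_range_add_C_mul_X_pow a hp2 m
  have hfcoeff : ∀ i < m, f.coeff i = a i := fun i hi =>
    hf ▸ coeff_sum_range_add_C_mul_X_pow_of_lt a _ hi
  have hlc : (aeval g f).leadingCoeff = p ^ 2 := by
    rw [← comp_eq_aeval, leadingCoeff_comp (by rw [hg, natDegree_sum_range_add_X_pow]; omega),
      hflc, hg, (monic_sum_range_add_X_pow b n).leadingCoeff, one_pow, mul_one]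
  by_contra! hΩ
  obtain ⟨P, hPm, hPd, hPh⟩ := exists_monic_dvd_of_leadingCoeff_eq_prime_pow hp hlc hΩ
  obtain ⟨μ, hμ, hμd, hμf⟩ :=
    exists_monic_dvd_of_monic_dvd_comp hPm hPd (comp_eq_aeval (p := f) ▸ hPh)
  refine not_monic_dvd_of_natDegree_coeff_lt (fun i hi => ?_) ?_ hμ hμd hμf
  · rw [hfdeg] at hi
    rw [hfcoeff i hi, hflc, natDegree_pow, natDegree_X_pow_add_C_mul_X_add_C hn]
    have := hdeg i (by omega)
    omega
  · rw [hfcoeff 0 (by omega)]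
    exact ha0
end

section
/- Let K be a field, let f ∈ K[Y] be irreducible over K of degree m ≥ 1, and let g ∈ K[Y] be a nonconstant polynomial. Then the degree of every irreducible factor of the composition f(g(Y)) over K is a multiple of m. -/
open Polynomial IntermediateField FiniteDimensional

/-- Capelli's theorem: the degree of every irreducible factor of f ∘ g is a
multiple of the degree of the irreducible polynomial f. -/
theorem stmt14 {K : Type*} [Field K] (f g : Polynomial K)
    (hf : Irreducible f) (hm : 1 ≤ f.natDegree) (hg : 0 < g.natDegree)
    (q : Polynomial K) (hq : Irreducible q) (hdvd : q ∣ f.comp g) :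
    f.natDegree ∣ q.natDegree := by
  haveI : Fact (Irreducible q) := ⟨hq⟩
  set L := AdjoinRoot q
  set α : L := AdjoinRoot.root q
  set β : L := aeval α g with hβ
  have pb := AdjoinRoot.powerBasis hq.ne_zero
  haveI : FiniteDimensional K L := pb.finite
  have hrootf : aeval β f = 0 := by
    rw [hβ, ← aeval_comp, AdjoinRoot.aeval_eq, AdjoinRoot.mk_eq_zero]
    exact hdvd
  have hint : IsIntegral K β := IsIntegral.of_finite K β
  have hdvdm : minpoly K β ∣ f := minpoly.dvd K β hrootf
  have hassoc : Associated (minpoly K β) f :=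
    (minpoly.irreducible hint).associated_of_dvd hf hdvdm
  have hdeg : (minpoly K β).natDegree = f.natDegree := natDegree_eq_natDegree (degree_eq_degree_of_associated hassoc)
  have hF : Module.finrank K K⟮β⟯ = f.natDegree := by
    rw [IntermediateField.adjoin.finrank hint, hdeg]
  have htower : Module.finrank K K⟮β⟯ * Module.finrank K⟮β⟯ L = Module.finrank K L :=
    Module.finrank_mul_finrank K K⟮β⟯ L
  have hL : Module.finrank K L = q.natDegree := by
    exact (AdjoinRoot.powerBasis hq.ne_zero).finrank.trans (AdjoinRoot.powerBasis_dim hq.ne_zero)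
  exact ⟨Module.finrank K⟮β⟯ L, by rw [← hL, ← htower, hF]⟩
end

section
/- Let K be a field and let g(X,Y) = b_0(X) + b_1(X)Y + ... + b_n(X)Y^n ∈ K[X,Y] with b_n ≠ 0, and let a_0, ..., a_{m-1} ∈ K[X] with a_0 ≠ 0. Write g = b·ḡ where b = gcd(b_0,...,b_n) and ḡ ∈ K[X,Y] is primitive. Then the polynomials ḡ(X,Y)^m and h(X,Y) = a_0(X) + a_1(X)g(X,Y) + ... + a_{m-1}(X)g(X,Y)^{m-1}, viewed as polynomials in Y over K(X), are relatively prime, provided that a_0 and ḡ are relatively prime in K[X][Y]. -/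
open Polynomial

theorem stmt15 {K : Type*} [Field K] [DecidableEq K] (m n : ℕ) (hm : 0 < m) (hn : 0 < n)
    (a b : ℕ → Polynomial K) (ha0 : a 0 ≠ 0) (hbn : b n ≠ 0)
    (g : Polynomial (Polynomial K))
    (hg : g = ∑ j ∈ Finset.range (n + 1), Polynomial.C (b j) * Polynomial.X ^ j)
    -- ḡ = g.primPart is g divided by b = gcd of its coefficients (the content);
    -- the hypothesis: a₀ and ḡ are relatively prime in K[X][Y]
    (hcop : IsRelPrime (Polynomial.C (a 0)) g.primPart) :
    IsCoprime
      ((g.primPart ^ m).map (algebraMap (Polynomial K) (RatFunc K)))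
      (((∑ i ∈ Finset.range m, Polynomial.C (a i) * g ^ i)).map
        (algebraMap (Polynomial K) (RatFunc K))) := by
  set φ := algebraMap (Polynomial K) (RatFunc K) with hφ
  rw [Polynomial.map_pow]
  apply IsCoprime.pow_left
  -- ḡ divides S - C (a 0)
  have hdvd : g.primPart ∣
      (∑ i ∈ Finset.range m, Polynomial.C (a i) * g ^ i) - Polynomial.C (a 0) := by
    obtain ⟨m', rfl⟩ : ∃ m', m = m' + 1 := ⟨m - 1, (Nat.succ_pred_eq_of_pos hm).symm⟩
    rw [Finset.sum_range_succ']
    simp only [pow_zero, mul_one, add_sub_cancel_right]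
    refine Finset.dvd_sum fun i _ => ?_
    exact Dvd.dvd.mul_left ((g.primPart_dvd).trans (dvd_pow_self g i.succ_ne_zero)) _
  obtain ⟨q, hq⟩ := hdvd
  have hS : (∑ i ∈ Finset.range m, Polynomial.C (a i) * g ^ i) =
      Polynomial.C (a 0) + g.primPart * q := by linear_combination hq
  rw [hS, Polynomial.map_add, Polynomial.map_mul, Polynomial.map_C]
  have hu : IsUnit (Polynomial.C (φ (a 0)) : Polynomial (RatFunc K)) := by
    rw [Polynomial.isUnit_C]
    exact ((map_ne_zero_iff φ (IsFractionRing.injective _ _)).mpr ha0).isUnit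
  obtain ⟨u, hu⟩ := hu
  have hcop0 : IsCoprime (g.primPart.map φ) (Polynomial.C (φ (a 0))) :=
    ⟨0, (↑u⁻¹ : Polynomial (RatFunc K)), by simp [← hu, ← mul_assoc]⟩
  exact hcop0.add_mul_left_right _
end

section
/- Let K be a field and let f(X,Y) = a_0(X) + a_1(X)Y + ... + a_m(X)Y^m with a_0·a_m ≠ 0. Let |·| be the nonarchimedean absolute value on K(X) given by |F| = ρ^{-deg F} (0 < ρ < 1), extended to an algebraic closure of K(X). If θ is a root (in the algebraic closure of K(X)) of f(X, g(X,Y)) viewed as a polynomial in Y, where g ∈ K[X][Y], then setting h(X,Y) = a_0 + a_1 g + ... + a_{m-1} g^{m-1}, one has |h(X,θ)| ≤ max over 1 ≤ v ≤ m, 0 ≤ k ≤ m-1 of |a_k| · (|a_{m-v}|/|a_m|)^{k/v}. -/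
/-!
Put `γ = g(X, θ)`, so that `∑_{i ≤ m} a_i γ^i = 0` and `h(X, θ) = ∑_{i < m} a_i γ^i`.
By the ultrametric inequality, `|a_m| |γ|^m = |∑_{i < m} a_i γ^i|` is at most `|a_i| |γ|^i` for
some `i < m`, so `|γ|^j ≤ |a_{m-j}| / |a_m|` with `j = m - i ≥ 1`. Hence every term of
`h(X, θ)` satisfies `|a_k γ^k| ≤ |a_k| (|a_{m-j}| / |a_m|)^{k/j}`, and the ultrametric
inequality once more bounds `|h(X, θ)|` by the largest of these.
-/

open Polynomial Finset

def AbsoluteValue.ofIsNonarchimedean {R S : Type*} [Semiring R] [Semiring S] [LinearOrder S]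
    [IsOrderedRing S] (v : R → S) (nonneg : ∀ x, 0 ≤ v x) (eq_zero : ∀ x, v x = 0 ↔ x = 0)
    (map_mul : ∀ x y, v (x * y) = v x * v y) (hna : IsNonarchimedean v) : AbsoluteValue R S where
  toFun := v
  map_mul' := map_mul
  nonneg' := nonneg
  eq_zero' := eq_zero
  add_le' x y := (hna x y).trans (max_le_add_of_nonneg (nonneg x) (nonneg y))

theorem pow_le_rpow_div_of_pow_le {t r : ℝ} (ht : 0 ≤ t) {j : ℕ} (hj : j ≠ 0) (h : t ^ j ≤ r)
    (k : ℕ) : t ^ k ≤ r ^ ((k : ℝ) / j) := by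
  calc t ^ k = (t ^ j) ^ ((k : ℝ) / j) := by
        rw [← Real.rpow_natCast t j, ← Real.rpow_mul ht, mul_div_cancel₀ _ (by exact_mod_cast hj),
          Real.rpow_natCast]
    _ ≤ r ^ ((k : ℝ) / j) := Real.rpow_le_rpow (pow_nonneg ht j) h (by positivity)

namespace AbsoluteValue

variable {S : Type*} [Ring S] [Nontrivial S] (abv : AbsoluteValue S ℝ) {m : ℕ} {c : ℕ → S} {γ : S}

theorem exists_mul_pow_le_of_sum_eq_zero (hna : IsNonarchimedean abv) (hm : 1 ≤ m)
    (hroot : ∑ i ∈ range (m + 1), c i * γ ^ i = 0) :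
    ∃ j ∈ Icc 1 m, abv (c m) * abv γ ^ j ≤ abv (c (m - j)) := by
  have hlead : c m * γ ^ m = -∑ i ∈ range m, c i * γ ^ i := by
    rw [sum_range_succ] at hroot
    exact eq_neg_of_add_eq_zero_right hroot
  obtain ⟨i, hi, hle⟩ := hna.finset_image_add_of_nonempty (fun i ↦ c i * γ ^ i)
    (t := range m) (nonempty_range_iff.mpr (by omega))
  rw [← abv.map_neg, ← hlead, map_mul, map_mul, map_pow, map_pow] at hle
  have him : i < m := mem_range.mp hi
  refine ⟨m - i, mem_Icc.mpr ⟨by omega, by omega⟩, ?_⟩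
  rw [Nat.sub_sub_self him.le]
  rcases (abv.nonneg γ).eq_or_lt with hγ | hγ
  · rw [← hγ, zero_pow (by omega), mul_zero]
    exact abv.nonneg _
  · rw [← pow_sub_mul_pow _ him.le, ← mul_assoc] at hle
    exact le_of_mul_le_mul_right hle (pow_pos hγ i)

theorem apply_sum_le_sup'_of_sum_eq_zero (hna : IsNonarchimedean abv) (hm : 1 ≤ m)
    (hcm : c m ≠ 0) (hroot : ∑ i ∈ range (m + 1), c i * γ ^ i = 0)
    (hne : (Icc 1 m ×ˢ range m).Nonempty) :
    abv (∑ k ∈ range m, c k * γ ^ k) ≤ (Icc 1 m ×ˢ range m).sup' hne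
      (fun p ↦ abv (c p.2) * (abv (c (m - p.1)) / abv (c m)) ^ ((p.2 : ℝ) / p.1)) := by
  obtain ⟨j, hj, hcj⟩ := abv.exists_mul_pow_le_of_sum_eq_zero hna hm hroot
  have hγj : abv γ ^ j ≤ abv (c (m - j)) / abv (c m) := by
    rw [le_div_iff₀ (abv.pos hcm), mul_comm]
    exact hcj
  refine (hna.apply_sum_le_sup (nonempty_range_iff.mpr (by omega))).trans
    (sup'_le _ _ fun k hk ↦ le_trans ?_
      (le_sup' _ (show (j, k) ∈ _ from mem_product.mpr ⟨hj, hk⟩)))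
  rw [map_mul, map_pow]
  exact mul_le_mul_of_nonneg_left
    (pow_le_rpow_div_of_pow_le (abv.nonneg γ) (by grind) hγj k) (abv.nonneg _)

end AbsoluteValue

theorem stmt18 {K : Type*} [Field K]
    (v : AlgebraicClosure (RatFunc K) → ℝ)
    (hvnn : ∀ x, 0 ≤ v x)
    (hv0 : ∀ x, v x = 0 ↔ x = 0)
    (hvmul : ∀ x y, v (x * y) = v x * v y)
    (hvna : ∀ x y, v (x + y) ≤ max (v x) (v y))
    (m : ℕ) (hm : 1 ≤ m) (a : ℕ → Polynomial K) (ham : a m ≠ 0)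
    (f g : Polynomial (Polynomial K))
    (hf : f = ∑ i ∈ Finset.range (m + 1), Polynomial.C (a i) * Polynomial.X ^ i)
    (θ : AlgebraicClosure (RatFunc K))
    (hroot : Polynomial.eval₂
        ((algebraMap (RatFunc K) (AlgebraicClosure (RatFunc K))).comp
          (algebraMap (Polynomial K) (RatFunc K))) θ (Polynomial.aeval g f) = 0) :
    v (Polynomial.eval₂
        ((algebraMap (RatFunc K) (AlgebraicClosure (RatFunc K))).comp
          (algebraMap (Polynomial K) (RatFunc K))) θ
        (∑ i ∈ Finset.range m, Polynomial.C (a i) * g ^ i))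
      ≤ ((Finset.Icc 1 m) ×ˢ Finset.range m).sup'
          (Finset.Nonempty.product (Finset.nonempty_Icc.mpr hm)
            (Finset.nonempty_range_iff.mpr (by omega)))
          (fun p =>
            v (algebraMap (RatFunc K) (AlgebraicClosure (RatFunc K))
                (algebraMap (Polynomial K) (RatFunc K) (a p.2)))
              * (v (algebraMap (RatFunc K) (AlgebraicClosure (RatFunc K))
                    (algebraMap (Polynomial K) (RatFunc K) (a (m - p.1))))
                  / v (algebraMap (RatFunc K) (AlgebraicClosure (RatFunc K))
                      (algebraMap (Polynomial K) (RatFunc K) (a m))))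
                ^ ((p.2 : ℝ) / (p.1 : ℝ))) := by
  set φ := (algebraMap (RatFunc K) (AlgebraicClosure (RatFunc K))).comp
    (algebraMap (Polynomial K) (RatFunc K))
  let abv := AbsoluteValue.ofIsNonarchimedean v hvnn hv0 hvmul hvna
  have hφ : Function.Injective φ :=
    (algebraMap (RatFunc K) _).injective.comp (IsFractionRing.injective (Polynomial K) _)
  have hroot' : ∑ i ∈ range (m + 1), φ (a i) * eval₂ φ θ g ^ i = 0 := by
    rw [← comp_eq_aeval, eval₂_comp, hf] at hroot
    simpa [eval₂_finsetSum] using hroot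
  have heval_h : eval₂ φ θ (∑ i ∈ range m, C (a i) * g ^ i)
      = ∑ i ∈ range m, φ (a i) * eval₂ φ θ g ^ i := by
    simp only [eval₂_finsetSum, eval₂_mul, eval₂_C, eval₂_pow]
  rw [heval_h]
  exact abv.apply_sum_le_sup'_of_sum_eq_zero hvna hm ((map_ne_zero_iff φ hφ).mpr ham) hroot' _
end
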